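/- (Corollary 3.6) Suppose a discrete form Ω : ℤ⁴ → Cl satisfies the discrete Joyce equation iDΩ = mΩe₀. For signs s, t ∈ {1, −1} put X_{s,t} := Ω P_{s0} P_{t12}, where P_{s0} = ½(1+s·e₀) and P_{t12} = ½(1+t·i e₁e₂). Then Ω = X_{1,1} + X_{1,−1} + X_{−1,1} + X_{−1,−1}, and each part satisfies both the discrete Dirac–Kähler equation and the discrete Hestenes equation with the corresponding signs: iD X_{s,t} = s·m·X_{s,t} and −(D X_{s,t})e₁e₂ = t·m·X_{s,t} e₀. -/

import Mathlib

noncomputable section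

/-- The Minkowski quadratic form `Q v = v₀² − v₁² − v₂² − v₃²` on `ℂ⁴`. -/
def Q : QuadraticForm ℂ (Fin 4 → ℂ) :=
  QuadraticMap.weightedSumSquares ℂ ![(1 : ℂ), -1, -1, -1]

/-- The Clifford algebra of spacetime over `ℂ`. -/
abbrev Cl : Type := CliffordAlgebra Q

/-- The generators `e_μ`, images of the standard basis vectors. -/
def e (μ : Fin 4) : Cl := CliffordAlgebra.ι Q (Pi.single μ 1)

/-- The volume element `e = e₀e₁e₂e₃`. -/
def eV : Cl := e 0 * e 1 * e 2 * e 3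

/-- The difference operator `(Δ_μ Ω)(k) = Ω(k + 1_μ) − Ω(k)`. -/
def Δ (μ : Fin 4) (Ω : (Fin 4 → ℤ) → Cl) : (Fin 4 → ℤ) → Cl :=
  fun k => Ω (k + Pi.single μ 1) - Ω k

/-- The discrete Dirac operator `DΩ = Σ_μ e_μ · (Δ_μ Ω)`. -/
def Dirac (Ω : (Fin 4 → ℤ) → Cl) : (Fin 4 → ℤ) → Cl :=
  fun k => ∑ μ : Fin 4, e μ * Δ μ Ω k

/-- The projectors `P_{s0} = ½(1 + s e₀)` for `s = ±1`. -/
def P0 (s : ℂ) : Cl := (2⁻¹ : ℂ) • (1 + s • e 0)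

/-- The projectors `P_{t12} = ½(1 + t i e₁e₂)` for `t = ±1`. -/
def P12 (t : ℂ) : Cl := (2⁻¹ : ℂ) • (1 + (t * Complex.I) • (e 1 * e 2))

/-! Since `D` multiplies from the left, it commutes with right multiplication by constants, so
`D(Ω P) = (DΩ) P = -i m Ω e₀ P` for `P = P_{s0} P_{t12}`. On the right, `P_{s0}` absorbs `e₀` with
eigenvalue `s` from either side, `P_{t12}` absorbs `e₁e₂` with eigenvalue `-t i`, and `e₀` commutes
with `e₁e₂`, hence with `P_{t12}`. -/

open QuadraticMap in
theorem QuadraticMap.weightedSumSquares_single {R ι : Type*} [CommSemiring R] [Fintype ι]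
    [DecidableEq ι] (w : ι → R) (i : ι) :
    weightedSumSquares R w (Pi.single i 1) = w i := by
  simp [weightedSumSquares_apply, Pi.single_apply]

open QuadraticMap in
theorem QuadraticMap.isOrtho_weightedSumSquares_single {R ι : Type*} [CommSemiring R] [Fintype ι]
    [DecidableEq ι] (w : ι → R) {i j : ι} (hij : i ≠ j) :
    (weightedSumSquares R w).IsOrtho (Pi.single i 1) (Pi.single j 1) := by
  rw [isOrtho_def, weightedSumSquares_single, weightedSumSquares_single, weightedSumSquares_apply,
    Fintype.sum_eq_add i j hij]
  · simp [hij, hij.symm]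
  · intro k hk
    simp [hk.1, hk.2]

lemma e_mul_self (μ : Fin 4) : e μ * e μ = algebraMap ℂ Cl (![1, -1, -1, -1] μ) := by
  rw [e, CliffordAlgebra.ι_sq_scalar]
  exact congrArg _ (QuadraticMap.weightedSumSquares_single _ _)

lemma e_mul_e_of_ne {μ ν : Fin 4} (h : μ ≠ ν) : e μ * e ν = -(e ν * e μ) :=
  CliffordAlgebra.ι_mul_ι_comm_of_isOrtho (QuadraticMap.isOrtho_weightedSumSquares_single _ h)

lemma e0_mul_e0 : e 0 * e 0 = 1 := by simp [e_mul_self]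

lemma e12_mul_e12 : e 1 * e 2 * (e 1 * e 2) = -1 := by
  rw [mul_assoc, ← mul_assoc (e 2), e_mul_e_of_ne (by decide : (2 : Fin 4) ≠ 1)]
  simp [e_mul_self, mul_assoc]

lemma e0_mul_e12 : e 0 * (e 1 * e 2) = e 1 * e 2 * e 0 := by
  rw [← mul_assoc, e_mul_e_of_ne (by decide : (0 : Fin 4) ≠ 1), neg_mul, mul_assoc,
    e_mul_e_of_ne (by decide : (0 : Fin 4) ≠ 2), mul_neg, neg_neg, mul_assoc]

lemma P0_add_P0_neg (s : ℂ) : P0 s + P0 (-s) = 1 := by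
  simp only [P0, neg_smul]
  module

lemma P12_add_P12_neg (t : ℂ) : P12 t + P12 (-t) = 1 := by
  simp only [P12, neg_mul, neg_smul]
  module

lemma e0_mul_P0 {s : ℂ} (hs : s * s = 1) : e 0 * P0 s = s • P0 s := by
  rw [P0, mul_smul_comm, mul_add, mul_one, mul_smul_comm, e0_mul_e0]
  linear_combination (norm := module) (-2⁻¹ : ℂ) • hs • e 0

lemma P0_mul_e0 {s : ℂ} (hs : s * s = 1) : P0 s * e 0 = s • P0 s := by
  rw [P0, smul_mul_assoc, add_mul, one_mul, smul_mul_assoc, e0_mul_e0]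
  linear_combination (norm := module) (-2⁻¹ : ℂ) • hs • e 0

lemma e0_mul_P12 (t : ℂ) : e 0 * P12 t = P12 t * e 0 := by
  rw [P12, mul_smul_comm, smul_mul_assoc, mul_add, add_mul, mul_smul_comm, smul_mul_assoc,
    e0_mul_e12, mul_one, one_mul]

lemma P12_mul_e12 {t : ℂ} (ht : t * t = 1) :
    P12 t * (e 1 * e 2) = -(t * Complex.I) • P12 t := by
  have hI : (t * Complex.I) * (t * Complex.I) = -1 := by
    linear_combination (Complex.I * Complex.I) * ht + Complex.I_mul_I
  rw [P12, smul_mul_assoc, add_mul, one_mul, smul_mul_assoc, e12_mul_e12]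
  linear_combination (norm := module) (2⁻¹ : ℂ) • hI • (e 1 * e 2)

lemma Dirac_mul_const (Ω : (Fin 4 → ℤ) → Cl) (c : Cl) (k : Fin 4 → ℤ) :
    Dirac (fun k => Ω k * c) k = Dirac Ω k * c := by
  simp only [Dirac, Δ, Finset.sum_mul, sub_mul, mul_assoc]

lemma mul_P0_mul_P12_mul_e0 (a : Cl) {s : ℂ} (hs : s * s = 1) (t : ℂ) :
    a * P0 s * P12 t * e 0 = s • (a * P0 s * P12 t) := by
  rw [mul_assoc, ← e0_mul_P12, ← mul_assoc, mul_assoc a, P0_mul_e0 hs, mul_smul_comm,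
    smul_mul_assoc]

lemma mul_P12_mul_e12 (a : Cl) {t : ℂ} (ht : t * t = 1) :
    a * P12 t * (e 1 * e 2) = -(t * Complex.I) • (a * P12 t) := by
  rw [mul_assoc, P12_mul_e12 ht, mul_smul_comm]

lemma Dirac_eq_neg_I_smul_of_joyce {m : ℂ} {Ω : (Fin 4 → ℤ) → Cl}
    (hΩ : ∀ k, Complex.I • Dirac Ω k = m • (Ω k * e 0)) (k : Fin 4 → ℤ) :
    Dirac Ω k = -(Complex.I * m) • (Ω k * e 0) := by
  rw [neg_smul, mul_smul, ← hΩ, smul_smul, Complex.I_mul_I, neg_one_smul, neg_neg]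

lemma Dirac_mul_P0_mul_P12 {m s : ℂ} {Ω : (Fin 4 → ℤ) → Cl}
    (hΩ : ∀ k, Dirac Ω k = -(Complex.I * m) • (Ω k * e 0)) (hs : s * s = 1) (t : ℂ)
    (k : Fin 4 → ℤ) :
    Dirac (fun k => Ω k * P0 s * P12 t) k = (-(Complex.I * m) * s) • (Ω k * P0 s * P12 t) := by
  simp only [mul_assoc, Dirac_mul_const, hΩ, smul_mul_assoc]
  rw [← mul_assoc (e 0), e0_mul_P0 hs, smul_mul_assoc, mul_smul_comm, smul_smul]

/-- Corollary 3.6: a solution `Ω` of the discrete Joyce equation `iDΩ = mΩe₀`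
decomposes into the four parts `X_{s,t} = Ω P_{s0} P_{t12}`, each satisfying
`iD X_{s,t} = s m X_{s,t}` and `−(D X_{s,t})e₁e₂ = t m X_{s,t} e₀`. -/
theorem stmt_8 (m : ℝ) (Ω : (Fin 4 → ℤ) → Cl)
    (hΩ : ∀ k, Complex.I • Dirac Ω k = (m : ℂ) • (Ω k * e 0)) :
    (∀ k, Ω k = Ω k * P0 1 * P12 1 + Ω k * P0 1 * P12 (-1)
            + Ω k * P0 (-1) * P12 1 + Ω k * P0 (-1) * P12 (-1)) ∧
    (∀ s t : ℂ, (s = 1 ∨ s = -1) → (t = 1 ∨ t = -1) →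
      (∀ k, Complex.I • Dirac (fun k => Ω k * P0 s * P12 t) k =
        (s * (m : ℂ)) • (Ω k * P0 s * P12 t)) ∧
      (∀ k, -(Dirac (fun k => Ω k * P0 s * P12 t) k * (e 1 * e 2)) =
        (t * (m : ℂ)) • ((Ω k * P0 s * P12 t) * e 0))) := by
  refine ⟨fun k => ?_, fun s t hs ht => ?_⟩
  · calc Ω k = Ω k * ((P0 1 + P0 (-1)) * (P12 1 + P12 (-1))) := by
          rw [P0_add_P0_neg, P12_add_P12_neg, mul_one, mul_one]
      _ = _ := by noncomm_ring
  have hs2 : s * s = 1 := by rcases hs with rfl | rfl <;> norm_num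
  have ht2 : t * t = 1 := by rcases ht with rfl | rfl <;> norm_num
  have hX := Dirac_mul_P0_mul_P12 (Dirac_eq_neg_I_smul_of_joyce hΩ) hs2 t
  refine ⟨fun k => ?_, fun k => ?_⟩
  · rw [hX, smul_smul]
    congr 1
    linear_combination (-(m : ℂ) * s) * Complex.I_mul_I
  · rw [hX, smul_mul_assoc, mul_P12_mul_e12 _ ht2, mul_P0_mul_P12_mul_e0 _ hs2, smul_smul,
      smul_smul, ← neg_smul]
    congr 1
    linear_combination (-(m : ℂ) * s * t) * Complex.I_mul_I
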